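/- For each fixed x, u ∈ ℝ, the function t ↦ ∂K_t(x,u)/∂t has at most four zeros in the interval (0,1); more precisely, ∂K_t(x,u)/∂t = K_t(x,u) · P_{x,u}(e^{−t})/(1−e^{−2t})², where P_{x,u} is a polynomial of degree at most 4 in e^{−t}. -/

import Mathlib

open Real MeasureTheory Set

/-- The Mehler kernel of the one-dimensional Ornstein--Uhlenbeck semigroup. -/
noncomputable def mehlerK (t x u : ℝ) : ℝ :=
  Real.exp (x ^ 2 / 2) / Real.sqrt (1 - Real.exp (-2 * t)) *
    Real.exp (-(Real.exp (-t) * u - x) ^ 2 / (2 * (1 - Real.exp (-2 * t))))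

/-!
Differentiating the Mehler kernel in `t` and clearing the common factor `K_t(x,u)` leaves, with
`r = e^{-t}`, the quotient `P_{x,u}(r) / (1 - r²)²` of the quartic
`P_{x,u}(r) = r⁴ - x u r³ + (x² + u² - 1) r² - x u r`.
Since `K_t > 0`, the critical times are exactly the `t` at which `e^{-t}` is a root of this
nonzero quartic, and `t ↦ e^{-t}` is injective, so there are at most four of them.
-/

open Polynomial in
theorem Polynomial.finite_setOf_eval_comp_eq_zero_and_ncard_le {α R : Type*} [CommRing R] [IsDomain R]
    {P : R[X]} (hP : P ≠ 0) {f : α → R} {s : Set α} (hf : InjOn f s) :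
    {a ∈ s | P.eval (f a) = 0}.Finite ∧ {a ∈ s | P.eval (f a) = 0}.ncard ≤ P.natDegree := by
  classical
  have hmaps : MapsTo f {a ∈ s | P.eval (f a) = 0} (P.roots.toFinset : Set R) :=
    fun a ha => by simpa [mem_roots hP] using ha.2
  have hinj : InjOn f {a ∈ s | P.eval (f a) = 0} := hf.mono fun _ ha => ha.1
  refine ⟨.of_injOn hmaps hinj P.roots.toFinset.finite_toSet, ?_⟩
  calc {a ∈ s | P.eval (f a) = 0}.ncard
      ≤ (P.roots.toFinset : Set R).ncard := ncard_le_ncard_of_injOn f hmaps hinj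
    _ = P.roots.toFinset.card := ncard_coe_finset _
    _ ≤ Multiset.card P.roots := Multiset.toFinset_card_le _
    _ ≤ P.natDegree := P.card_roots'

open Polynomial in
noncomputable def mehlerPoly (x u : ℝ) : ℝ[X] :=
  X ^ 4 - C (u * x) * X ^ 3 + C (x ^ 2 + u ^ 2 - 1) * X ^ 2 - C (u * x) * X

lemma mehlerPoly_eval (x u r : ℝ) :
    (mehlerPoly x u).eval r = r ^ 4 - u * x * r ^ 3 + (x ^ 2 + u ^ 2 - 1) * r ^ 2 - u * x * r := by
  simp [mehlerPoly]

lemma mehlerPoly_natDegree (x u : ℝ) : (mehlerPoly x u).natDegree = 4 := by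
  unfold mehlerPoly; compute_degree!

lemma mehlerPoly_ne_zero (x u : ℝ) : mehlerPoly x u ≠ 0 :=
  Polynomial.ne_zero_of_natDegree_gt (n := 0) (by rw [mehlerPoly_natDegree]; norm_num)

lemma mehlerPoly_degree_le (x u : ℝ) : (mehlerPoly x u).degree ≤ 4 :=
  Polynomial.degree_le_of_natDegree_le (mehlerPoly_natDegree x u).le

lemma exp_neg_two_mul (t : ℝ) : exp (-2 * t) = exp (-t) ^ 2 := by
  rw [← exp_nat_mul]; ring_nf

lemma one_sub_exp_neg_two_mul_pos {t : ℝ} (ht : 0 < t) : 0 < 1 - exp (-2 * t) :=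
  sub_pos.mpr (exp_lt_one_iff.mpr (by linarith))

lemma mehlerK_pos (x u : ℝ) {t : ℝ} (ht : 0 < t) : 0 < mehlerK t x u := by
  have := one_sub_exp_neg_two_mul_pos ht
  unfold mehlerK; positivity

lemma hasDerivAt_mehlerK (x u : ℝ) {t : ℝ} (ht : 0 < t) :
    HasDerivAt (fun s => mehlerK s x u)
      (mehlerK t x u * (mehlerPoly x u).eval (exp (-t)) / (1 - exp (-2 * t)) ^ 2) t := by
  have hq := one_sub_exp_neg_two_mul_pos ht
  have hexp : HasDerivAt (fun s : ℝ => exp (-s)) (-exp (-t)) t := by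
    simpa using (hasDerivAt_neg t).exp
  have hq' : HasDerivAt (fun s : ℝ => 1 - exp (-2 * s)) (2 * exp (-2 * t)) t := by
    simpa [mul_comm] using (((hasDerivAt_id t).const_mul (-2)).exp).const_sub 1
  have hpref := (hasDerivAt_const t (exp (x ^ 2 / 2))).div (hq'.sqrt hq.ne') (sqrt_pos.mpr hq).ne'
  have hgauss := ((((hexp.mul_const u).sub_const x).pow 2).neg.div
    (hq'.const_mul 2) (by positivity)).exp
  refine (hpref.mul hgauss).congr_deriv ?_
  have hq2 : 1 - exp (-t) ^ 2 ≠ 0 := by rw [← exp_neg_two_mul]; exact hq.ne'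
  rw [sq_sqrt hq.le]
  simp only [mehlerK, mehlerPoly_eval, exp_neg_two_mul, Pi.div_apply, Pi.neg_apply, Pi.pow_apply]
  field_simp
  ring

lemma deriv_mehlerK_eq_zero_iff (x u : ℝ) {t : ℝ} (ht : 0 < t) :
    deriv (fun s => mehlerK s x u) t = 0 ↔ (mehlerPoly x u).eval (exp (-t)) = 0 := by
  rw [(hasDerivAt_mehlerK x u ht).deriv, div_eq_zero_iff, mul_eq_zero,
    or_iff_right (mehlerK_pos x u ht).ne',
    or_iff_left (pow_pos (one_sub_exp_neg_two_mul_pos ht) 2).ne']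

theorem mehler_time_deriv_polynomial_structure (x u : ℝ) :
    (∃ P : Polynomial ℝ, P.degree ≤ 4 ∧
      ∀ t ∈ Set.Ioo (0:ℝ) 1,
        deriv (fun s => mehlerK s x u) t =
          mehlerK t x u * P.eval (Real.exp (-t)) / (1 - Real.exp (-2 * t)) ^ 2) ∧
    ({t ∈ Set.Ioo (0:ℝ) 1 | deriv (fun s => mehlerK s x u) t = 0}.Finite ∧
      {t ∈ Set.Ioo (0:ℝ) 1 | deriv (fun s => mehlerK s x u) t = 0}.ncard ≤ 4) := by
  refine ⟨⟨mehlerPoly x u, mehlerPoly_degree_le x u,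
    fun t ht => (hasDerivAt_mehlerK x u ht.1).deriv⟩, ?_⟩
  have hzeros : {t ∈ Ioo (0:ℝ) 1 | deriv (fun s => mehlerK s x u) t = 0} =
      {t ∈ Ioo (0:ℝ) 1 | (mehlerPoly x u).eval (exp (-t)) = 0} :=
    sep_ext_iff.mpr fun t ht => deriv_mehlerK_eq_zero_iff x u ht.1
  rw [hzeros, ← mehlerPoly_natDegree x u]
  exact Polynomial.finite_setOf_eval_comp_eq_zero_and_ncard_le (mehlerPoly_ne_zero x u)
    (fun a _ b _ hab => neg_injective (exp_injective hab))
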